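/- arXiv:1502.03622 — 2 statements merged into one kernel-verified Lean document; each statement's English description precedes it below -/
import Mathlib

section
/- Every continuous functional has an associate: if Y : (ℕ → ℕ) → ℕ is pointwise continuous, then there exists γ : List ℕ → ℕ such that (i) γ is a neighbourhood function (if σ is a prefix of τ and γ(σ) > 0 then γ(σ) = γ(τ)), (ii) for every β : ℕ → ℕ there exists k with γ(β̄k) > 0, and (iii) for all β and k, if γ(β̄k) > 0 then γ(β̄k) = Y(β) + 1. -/
/-! An associate of `Y` can be read off any finite sequence `σ` whose length is already a
modulus of continuity of `Y` at `σ` extended by zeros: then `Y` of that extension is the value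
of `Y` on every extension of `σ`. Whether the length is a modulus is undecidable in general, so
the associate is defined by classical case distinction. -/

/-- Initial segment β̄k = [β 0, …, β (k−1)]. -/
def initSeg (β : ℕ → ℕ) (k : ℕ) : List ℕ := (List.range k).map β

def IsModulus {α β : Type*} (Y : (ℕ → α) → β) (f : ℕ → α) (n : ℕ) : Prop :=
  ∀ g : ℕ → α, (∀ i < n, f i = g i) → Y f = Y g

namespace IsModulus

variable {α β : Type*} {Y : (ℕ → α) → β} {f g : ℕ → α} {m n : ℕ}

theorem mono (h : IsModulus Y f n) (hnm : n ≤ m) : IsModulus Y f m :=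
  fun g hg => h g fun i hi => hg i (hi.trans_le hnm)

theorem of_eqOn (h : IsModulus Y f n) (hfg : ∀ i < n, f i = g i) : IsModulus Y g n := by
  intro g' hg'
  rw [← h g hfg]
  exact h g' fun i hi => (hfg i hi).trans (hg' i hi)

end IsModulus

/-- The sequence `σ ++ 0^ω`. -/
def zeroExtend {α : Type*} [Zero α] (σ : List α) : ℕ → α := fun i => σ.getD i 0

theorem zeroExtend_eq_of_isPrefix {α : Type*} [Zero α] {σ τ : List α} (hστ : σ <+: τ)
    {i : ℕ} (hi : i < σ.length) : zeroExtend σ i = zeroExtend τ i := by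
  simp only [zeroExtend, List.getD_eq_getElem?_getD, List.getElem?_eq_getElem hi,
    List.getElem?_eq_getElem (hi.trans_le hστ.length_le), hστ.getElem hi]

theorem zeroExtend_initSeg (β : ℕ → ℕ) {k i : ℕ} (hi : i < k) :
    zeroExtend (initSeg β k) i = β i := by
  simp [zeroExtend, initSeg, List.getD_eq_getElem?_getD, List.getElem?_range hi]

@[simp]
theorem length_initSeg (β : ℕ → ℕ) (k : ℕ) : (initSeg β k).length = k := by
  simp [initSeg]

open Classical in
noncomputable def associate (Y : (ℕ → ℕ) → ℕ) (σ : List ℕ) : ℕ :=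
  if IsModulus Y (zeroExtend σ) σ.length then Y (zeroExtend σ) + 1 else 0

section associate

variable {Y : (ℕ → ℕ) → ℕ}

theorem associate_of_isModulus {σ : List ℕ} (h : IsModulus Y (zeroExtend σ) σ.length) :
    associate Y σ = Y (zeroExtend σ) + 1 := if_pos h

theorem isModulus_of_associate_pos {σ : List ℕ} (h : 0 < associate Y σ) :
    IsModulus Y (zeroExtend σ) σ.length := by
  by_contra hσ
  simp [associate, hσ] at h

theorem associate_eq_of_isPrefix {σ τ : List ℕ} (hστ : σ <+: τ) (hσ : 0 < associate Y σ) :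
    associate Y σ = associate Y τ := by
  have hmod := isModulus_of_associate_pos hσ
  have hagree : ∀ i < σ.length, zeroExtend σ i = zeroExtend τ i :=
    fun i hi => zeroExtend_eq_of_isPrefix hστ hi
  have hτ : IsModulus Y (zeroExtend τ) τ.length :=
    (hmod.of_eqOn hagree).mono hστ.length_le
  rw [associate_of_isModulus hmod, associate_of_isModulus hτ, hmod _ hagree]

theorem associate_initSeg_pos {β : ℕ → ℕ} {N : ℕ} (hN : IsModulus Y β N) :
    0 < associate Y (initSeg β N) := by
  have h : IsModulus Y (zeroExtend (initSeg β N)) (initSeg β N).length := by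
    rw [length_initSeg]
    exact hN.of_eqOn fun i hi => (zeroExtend_initSeg β hi).symm
  simp [associate_of_isModulus h]

theorem associate_initSeg_eq (β : ℕ → ℕ) {k : ℕ} (hpos : 0 < associate Y (initSeg β k)) :
    associate Y (initSeg β k) = Y β + 1 := by
  have hmod := isModulus_of_associate_pos hpos
  rw [associate_of_isModulus hmod, hmod β fun i hi => zeroExtend_initSeg β (by simpa using hi)]

end associate

/-- Every pointwise continuous functional has an associate which is a
neighbourhood function. -/
theorem continuous_has_associate (Y : (ℕ → ℕ) → ℕ)
    (hY : ∀ f : ℕ → ℕ, ∃ N, ∀ g : ℕ → ℕ, (∀ i < N, f i = g i) → Y f = Y g) :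
    ∃ γ : List ℕ → ℕ,
      (∀ σ τ : List ℕ, σ <+: τ → 0 < γ σ → γ σ = γ τ) ∧
      (∀ β : ℕ → ℕ, ∃ k : ℕ, 0 < γ (initSeg β k)) ∧
      (∀ (β : ℕ → ℕ) (k : ℕ), 0 < γ (initSeg β k) → γ (initSeg β k) = Y β + 1) := by
  refine ⟨associate Y, fun σ τ => associate_eq_of_isPrefix, fun β => ?_,
    fun β k => associate_initSeg_eq β⟩
  obtain ⟨N, hN⟩ := hY β
  exact ⟨N, associate_initSeg_pos hN⟩
end

section
/- Uniform modulus from a pointwise modulus on Cantor space via a bar argument: suppose Y : (ℕ → ℕ) → ℕ and H : (ℕ → ℕ) → ℕ satisfy that for every binary f and every g, if f i = g i for all i < H f then Y f = Y g. Then there exists N₀ such that all binary f, g agreeing below N₀ satisfy Y f = Y g, and moreover N₀ can be chosen as the maximum of H over the finite set {τ ++ 0^ω : τ binary of length N₀'} for a suitable N₀' obtained from weak König's lemma. -/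
/-- Extension of a finite binary sequence given by a function on `Fin n` by zeros. -/
def finExt {n : ℕ} (τ : Fin n → Fin 2) : ℕ → ℕ :=
  fun i => if h : i < n then (τ ⟨i, h⟩ : ℕ) else 0

/-!
For `f` in a compact set `K` of sequences over a discrete space, the cylinder of sequences that
agree with `f` below `H f` is an open neighbourhood of `f`, so finitely many such cylinders, centred
at `f ∈ t`, cover `K`; then `max_{f ∈ t} H f` is a uniform modulus. The binary sequences form such
a `K`. Since each of them agrees below `N₀` with some `τ ++ 0^ω`, `τ` of length `N₀`, the maximum
of `H` over these finitely many points is a uniform modulus too.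
-/

open Set

theorem IsCompact.exists_finset_forall_exists_eqOn {ι α : Type*} [TopologicalSpace α]
    [DiscreteTopology α] {K : Set (ι → α)} (hK : IsCompact K) (S : (ι → α) → Finset ι) :
    ∃ t : Finset (ι → α), (∀ x ∈ t, x ∈ K) ∧ ∀ y ∈ K, ∃ x ∈ t, ∀ i ∈ S x, x i = y i := by
  obtain ⟨t, htK, hcover⟩ := hK.elim_nhds_subcover (fun x => (S x : Set ι).pi fun i => {x i})
    fun x _ => (isOpen_set_pi (S x).finite_toSet fun i _ => isOpen_discrete _).mem_nhds
      fun i _ => rfl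
  refine ⟨t, htK, fun y hy => ?_⟩
  obtain ⟨x, hxt, hyx⟩ := mem_iUnion₂.1 (hcover hy)
  exact ⟨x, hxt, fun i hi => (hyx i hi).symm⟩

section Modulus

variable {α β : Type*} (K : Set (ℕ → α)) (Y : (ℕ → α) → β)

def IsPointwiseModulus (H : (ℕ → α) → ℕ) : Prop :=
  ∀ f ∈ K, ∀ g ∈ K, (∀ i < H f, f i = g i) → Y f = Y g

def IsUniformModulus (N : ℕ) : Prop :=
  ∀ f ∈ K, ∀ g ∈ K, (∀ i < N, f i = g i) → Y f = Y g

variable {K Y}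

theorem IsUniformModulus.mono {M N : ℕ} (hM : IsUniformModulus K Y M) (hMN : M ≤ N) :
    IsUniformModulus K Y N :=
  fun f hf g hg hfg => hM f hf g hg fun i hi => hfg i (hi.trans_le hMN)

theorem IsPointwiseModulus.isUniformModulus_sup {γ : Type*} {H : (ℕ → α) → ℕ}
    (hH : IsPointwiseModulus K Y H) (P : Finset γ) (p : γ → ℕ → α) (hpK : ∀ c ∈ P, p c ∈ K)
    (hP : ∀ f ∈ K, ∃ c ∈ P, ∀ i < H (p c), p c i = f i) :
    IsUniformModulus K Y (P.sup fun c => H (p c)) := by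
  intro f hf g hg hfg
  obtain ⟨c, hcP, hcf⟩ := hP f hf
  have hHc : H (p c) ≤ P.sup fun c => H (p c) := Finset.le_sup (f := fun c => H (p c)) hcP
  have hcg : ∀ i < H (p c), p c i = g i := fun i hi => (hcf i hi).trans (hfg i (hi.trans_le hHc))
  exact (hH _ (hpK c hcP) f hf hcf).symm.trans (hH _ (hpK c hcP) g hg hcg)

theorem IsPointwiseModulus.exists_isUniformModulus [TopologicalSpace α] [DiscreteTopology α]
    {H : (ℕ → α) → ℕ} (hH : IsPointwiseModulus K Y H) (hK : IsCompact K) :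
    ∃ N, IsUniformModulus K Y N := by
  obtain ⟨t, htK, hcover⟩ := hK.exists_finset_forall_exists_eqOn fun x => Finset.range (H x)
  exact ⟨_, hH.isUniformModulus_sup t id htK fun f hf => by simpa using hcover f hf⟩

theorem IsUniformModulus.sup_of_forall_exists_eq_lt {γ : Type*} {H : (ℕ → α) → ℕ} {N : ℕ}
    (hN : IsUniformModulus K Y N) (hH : IsPointwiseModulus K Y H) (P : Finset γ)
    (p : γ → ℕ → α) (hpK : ∀ c ∈ P, p c ∈ K) (hP : ∀ f ∈ K, ∃ c ∈ P, ∀ i < N, p c i = f i) :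
    IsUniformModulus K Y (P.sup fun c => H (p c)) := by
  rcases le_total N (P.sup fun c => H (p c)) with hle | hle
  · exact hN.mono hle
  · refine hH.isUniformModulus_sup P p hpK fun f hf => ?_
    obtain ⟨c, hcP, hcf⟩ := hP f hf
    exact ⟨c, hcP, fun i hi =>
      hcf i (hi.trans_le ((Finset.le_sup (f := fun c => H (p c)) hcP).trans hle))⟩

end Modulus

def binarySeqs : Set (ℕ → ℕ) := {f | ∀ i, f i ≤ 1}

theorem isCompact_binarySeqs : IsCompact binarySeqs := by
  have h : binarySeqs = univ.pi fun _ => Iic 1 := by ext f; simp [binarySeqs, Pi.le_def]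
  exact h ▸ isCompact_univ_pi fun _ => (finite_Iic 1).isCompact

theorem finExt_mem_binarySeqs {n : ℕ} (τ : Fin n → Fin 2) : finExt τ ∈ binarySeqs := by
  intro i
  unfold finExt
  split
  · exact Fin.is_le _
  · exact zero_le_one

theorem exists_finExt_eq_lt {f : ℕ → ℕ} (hf : f ∈ binarySeqs) (n : ℕ) :
    ∃ τ : Fin n → Fin 2, ∀ i < n, finExt τ i = f i :=
  ⟨fun i => ⟨f i, Nat.lt_succ_of_le (hf i)⟩, fun i hi => by simp [finExt, hi]⟩

/-- Uniform modulus from a pointwise modulus on Cantor space: the uniform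
modulus `N₀` can be chosen as the maximum of `H` over `{τ ++ 0^ω : τ binary of
length N₀'}` for a suitable `N₀'`. -/
theorem uniform_modulus_from_pointwise (Y H : (ℕ → ℕ) → ℕ)
    (hH : ∀ f : ℕ → ℕ, (∀ i, f i ≤ 1) → ∀ g : ℕ → ℕ,
      (∀ i < H f, f i = g i) → Y f = Y g) :
    (∃ N₀ : ℕ, ∀ f g : ℕ → ℕ, (∀ i, f i ≤ 1) → (∀ i, g i ≤ 1) →
      (∀ i < N₀, f i = g i) → Y f = Y g) ∧
    (∃ N₀' : ℕ, ∀ f g : ℕ → ℕ, (∀ i, f i ≤ 1) → (∀ i, g i ≤ 1) →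
      (∀ i < Finset.univ.sup (fun τ : Fin N₀' → Fin 2 => H (finExt τ)), f i = g i) →
      Y f = Y g) := by
  have hH' : IsPointwiseModulus binarySeqs Y H := fun f hf g _ => hH f hf g
  obtain ⟨N₀, hN₀⟩ := hH'.exists_isUniformModulus isCompact_binarySeqs
  have hfin := hN₀.sup_of_forall_exists_eq_lt hH' Finset.univ finExt
    (fun τ _ => finExt_mem_binarySeqs τ) fun f hf => by
      simpa using exists_finExt_eq_lt hf N₀
  exact ⟨⟨N₀, fun f g hf hg => hN₀ f hf g hg⟩, N₀, fun f g hf hg => hfin f hf g hg⟩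
end
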